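/- Let k ≥ 6 be an integer and δ ≥ 1 a real number. Suppose γ(n,τ) ≥ 0 is defined for all integers n ≥ k and τ ≥ 0 and satisfies: γ(k,τ) ≤ √δ for all τ ≥ 0; γ(n,0) ≤ 2^n for all n ≥ k; and γ(n,τ) ≤ γ(n−1,τ) · γ(n,τ−1)^{1/(n−1)} for all n > k and τ ≥ 1. Then γ(n,τ) ≤ δ^{(n−1)/(2(k−1))} · 2^{n³/2^τ} for all n ≥ k and τ ≥ 0. -/
import Mathlib


set_option maxHeartbeats 1000000 in
theorem stmt7 (k : ℕ) (hk : 6 ≤ k) (δ : ℝ) (hδ : 1 ≤ δ)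
    (γ : ℕ → ℕ → ℝ)
    (hnonneg : ∀ n τ : ℕ, k ≤ n → 0 ≤ γ n τ)
    (hbase1 : ∀ τ : ℕ, γ k τ ≤ Real.sqrt δ)
    (hbase2 : ∀ n : ℕ, k ≤ n → γ n 0 ≤ 2 ^ (n : ℕ))
    (hrec : ∀ n τ : ℕ, k < n → 1 ≤ τ →
      γ n τ ≤ γ (n - 1) τ * γ n (τ - 1) ^ ((1 : ℝ) / ((n : ℝ) - 1))) :
    ∀ n τ : ℕ, k ≤ n →
      γ n τ ≤ δ ^ (((n : ℝ) - 1) / (2 * ((k : ℝ) - 1))) *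
        2 ^ ((n : ℝ) ^ 3 / 2 ^ (τ : ℝ)) := by
  have hk6 : (6:ℝ) ≤ (k:ℝ) := by exact_mod_cast hk
  have hδ0 : (0:ℝ) < δ := lt_of_lt_of_le one_pos hδ
  have hK : (0:ℝ) < 2 * ((k:ℝ) - 1) := by linarith
  have one_le_rpow : ∀ x e : ℝ, 1 ≤ x → 0 ≤ e → 1 ≤ x ^ e := by
    intro x e hx he
    calc (1:ℝ) = x ^ (0:ℝ) := (Real.rpow_zero x).symm
      _ ≤ x ^ e := Real.rpow_le_rpow_of_exponent_le hx he
  suffices H : ∀ τ n : ℕ, k ≤ n →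
      γ n τ ≤ δ ^ (((n : ℝ) - 1) / (2 * ((k : ℝ) - 1))) *
        2 ^ ((n : ℝ) ^ 3 / 2 ^ (τ : ℝ)) by
    intro n τ hn; exact H τ n hn
  intro τ
  induction τ with
  | zero =>
    intro n hn
    have hn6 : (6:ℝ) ≤ (n:ℝ) := le_trans hk6 (by exact_mod_cast hn)
    have h1 : (1:ℝ) ≤ δ ^ (((n : ℝ) - 1) / (2 * ((k : ℝ) - 1))) :=
      one_le_rpow _ _ hδ (div_nonneg (by linarith) hK.le)
    have h2 : ((0:ℕ):ℝ) = (0:ℝ) := by norm_num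
    rw [h2, Real.rpow_zero]
    calc γ n 0 ≤ (2:ℝ) ^ (n:ℕ) := hbase2 n hn
      _ = (2:ℝ) ^ ((n:ℕ):ℝ) := (Real.rpow_natCast 2 n).symm
      _ ≤ (2:ℝ) ^ ((n:ℝ)^3 / 1) := by
          apply Real.rpow_le_rpow_of_exponent_le one_le_two
          rw [div_one]
          have h36 : (36:ℝ) ≤ (n:ℝ)^2 := by nlinarith
          nlinarith [mul_le_mul_of_nonneg_left h36 (by linarith : (0:ℝ) ≤ (n:ℝ))]
      _ ≤ δ ^ (((n : ℝ) - 1) / (2 * ((k : ℝ) - 1))) * 2 ^ ((n:ℝ)^3 / 1) :=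
          le_mul_of_one_le_left (Real.rpow_nonneg (by norm_num) _) h1
  | succ τ ihτ =>
    intro n hn
    induction n, hn using Nat.le_induction with
    | base =>
      have hk1 : (k:ℝ) - 1 ≠ 0 := by linarith
      have he : ((k:ℝ) - 1) / (2 * ((k:ℝ) - 1)) = 1/2 := by
        field_simp
      rw [he]
      calc γ k (τ+1) ≤ Real.sqrt δ := hbase1 _
        _ = δ ^ ((1:ℝ)/2) := Real.sqrt_eq_rpow δ
        _ ≤ δ ^ ((1:ℝ)/2) * 2 ^ (((k:ℕ):ℝ)^3 / 2 ^ (((τ+1:ℕ)):ℝ)) := by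
            apply le_mul_of_one_le_right (Real.rpow_nonneg hδ0.le _)
            apply one_le_rpow _ _ one_le_two
            positivity
    | succ n hn ihn =>
      have hn6 : (6:ℝ) ≤ (n:ℝ) := le_trans hk6 (by exact_mod_cast hn)
      have hN0 : (0:ℝ) < (n:ℝ) := by linarith
      have hNne : (n:ℝ) ≠ 0 := hN0.ne'
      have hK1 : (k:ℝ) - 1 ≠ 0 := by linarith
      set N : ℝ := (n:ℝ) with hNdef
      -- the recurrence
      have hcast : ((n+1:ℕ):ℝ) - 1 = N := by push_cast; ring
      have hstep : γ (n+1) (τ+1) ≤ γ n (τ+1) * γ (n+1) τ ^ ((1:ℝ)/N) := by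
        have h := hrec (n+1) (τ+1) (by omega) (by omega)
        simpa [hcast] using h
      -- abbreviations for exponents
      have hT0 : (0:ℝ) < (2:ℝ) ^ ((τ:ℕ):ℝ) := Real.rpow_pos_of_pos two_pos _
      set T : ℝ := (2:ℝ) ^ ((τ:ℕ):ℝ) with hTdef
      have hTne : T ≠ 0 := hT0.ne'
      have hTsucc : (2:ℝ) ^ (((τ+1:ℕ)):ℝ) = T * 2 := by
        push_cast
        rw [Real.rpow_add two_pos, Real.rpow_one]
      -- IH in n
      have ihn' : γ n (τ+1) ≤ δ ^ ((N - 1) / (2 * ((k:ℝ) - 1))) * 2 ^ (N^3 / (T*2)) := by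
        have := ihn
        rwa [hTsucc] at this
      -- IH in τ
      have ihτ' : γ (n+1) τ ≤ δ ^ (N / (2 * ((k:ℝ) - 1))) * 2 ^ ((N+1)^3 / T) := by
        have h := ihτ (n+1) (by omega)
        have h1 : ((n+1:ℕ):ℝ) = N + 1 := by push_cast; ring
        rwa [h1, add_sub_cancel_right] at h
      -- raise to power 1/N
      have h4 : γ (n+1) τ ^ ((1:ℝ)/N) ≤
          (δ ^ (N / (2 * ((k:ℝ) - 1))) * 2 ^ ((N+1)^3 / T)) ^ ((1:ℝ)/N) :=
        Real.rpow_le_rpow (hnonneg _ _ (by omega)) ihτ' (by positivity)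
      have h5 : (δ ^ (N / (2 * ((k:ℝ) - 1))) * 2 ^ ((N+1)^3 / T)) ^ ((1:ℝ)/N) =
          δ ^ (N / (2 * ((k:ℝ) - 1)) * (1/N)) * 2 ^ ((N+1)^3 / T * (1/N)) := by
        rw [Real.mul_rpow (by positivity) (by positivity),
          ← Real.rpow_mul hδ0.le, ← Real.rpow_mul (by norm_num)]
      -- combine
      have h6 : γ (n+1) (τ+1) ≤
          (δ ^ ((N - 1) / (2 * ((k:ℝ) - 1))) * 2 ^ (N^3 / (T*2))) *
          (δ ^ (N / (2 * ((k:ℝ) - 1)) * (1/N)) * 2 ^ ((N+1)^3 / T * (1/N))) := by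
        refine le_trans hstep ?_
        have hγn : 0 ≤ γ n (τ+1) := hnonneg _ _ hn
        exact mul_le_mul ihn' (h5 ▸ h4) (Real.rpow_nonneg (hnonneg _ _ (by omega)) _)
          (by positivity)
      have h7 : (δ ^ ((N - 1) / (2 * ((k:ℝ) - 1))) * 2 ^ (N^3 / (T*2))) *
          (δ ^ (N / (2 * ((k:ℝ) - 1)) * (1/N)) * 2 ^ ((N+1)^3 / T * (1/N))) =
          δ ^ ((N - 1) / (2 * ((k:ℝ) - 1)) + N / (2 * ((k:ℝ) - 1)) * (1/N)) *
          2 ^ (N^3 / (T*2) + (N+1)^3 / T * (1/N)) := by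
        rw [Real.rpow_add hδ0, Real.rpow_add two_pos]; ring
      -- exponent of δ
      have hδexp : (N - 1) / (2 * ((k:ℝ) - 1)) + N / (2 * ((k:ℝ) - 1)) * (1/N) =
          ((N + 1) - 1) / (2 * ((k:ℝ) - 1)) := by
        field_simp
        ring
      -- exponent of 2
      have key : N^3 * N + 2 * (N+1)^3 ≤ N * (N+1)^3 := by
        have hN2 : 6 * N^2 ≤ N^3 := by nlinarith [sq_nonneg N]
        nlinarith [hN2, sq_nonneg (N - 6)]
      have h2exp : N^3 / (T*2) + (N+1)^3 / T * (1/N) ≤ (N+1)^3 / (T*2) := by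
        rw [← sub_nonneg]
        have heq : (N+1)^3 / (T*2) - (N^3 / (T*2) + (N+1)^3 / T * (1/N)) =
            (N * (N+1)^3 - (N^3 * N + 2 * (N+1)^3)) / (T * 2 * N) := by
          field_simp
        rw [heq]
        exact div_nonneg (by linarith) (by positivity)
      have h8 : (2:ℝ) ^ (N^3 / (T*2) + (N+1)^3 / T * (1/N)) ≤ 2 ^ ((N+1)^3 / (T*2)) :=
        Real.rpow_le_rpow_of_exponent_le one_le_two h2exp
      -- finish
      have hgoalcast : ((n+1:ℕ):ℝ) = N + 1 := by push_cast; ring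
      rw [hgoalcast, hTsucc]
      calc γ (n+1) (τ+1) ≤ _ := h6
        _ = δ ^ ((N - 1) / (2 * ((k:ℝ) - 1)) + N / (2 * ((k:ℝ) - 1)) * (1/N)) *
            2 ^ (N^3 / (T*2) + (N+1)^3 / T * (1/N)) := h7
        _ ≤ δ ^ ((N + 1 - 1) / (2 * ((k:ℝ) - 1))) * 2 ^ ((N+1)^3 / (T*2)) := by
            rw [hδexp]
            exact mul_le_mul_of_nonneg_left h8 (Real.rpow_nonneg hδ0.le _)
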